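/- If there exists a nonempty u ⊆ {1,…,s} such that rank(C_{u,1_u}) < |u| over F₂, then the maximal gain coefficient Γ = max over nonempty u′ ⊆ {1,…,s} and k ∈ {0,1,…,m−1}^{|u′|} of Γ_{u′,k} equals 2^m. -/

import Mathlib

open Finset

noncomputable section

/-- The bit vector `i⃗ ∈ F₂^m` of the integer `i = Σ_{ℓ=1}^m i_ℓ 2^{ℓ-1}`. -/
def bvec (m : ℕ) (i : ℕ) : Fin m → ZMod 2 :=
  fun ℓ => if Nat.testBit i ℓ.1 then 1 else 0

/-- The `(r+1)`-st row (i.e. `r` with 0-indexing) of an `m × m` matrix over `F₂`,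
as a vector in `F₂^m`; junk value `0` if `r ≥ m` (never used under the hypotheses below). -/
def rowAt (m : ℕ) (A : Matrix (Fin m) (Fin m) (ZMod 2)) (r : ℕ) : Fin m → ZMod 2 :=
  fun ℓ => if h : r < m then A ⟨r, h⟩ ℓ else 0

/-- The stacked matrix `C_{u,k}`: for each `j ∈ u`, the first `k j` rows of `C j`. -/
def stack {m s : ℕ} (C : Fin s → Matrix (Fin m) (Fin m) (ZMod 2))
    (u : Finset (Fin s)) (k : Fin s → ℕ) :
    Matrix ((j : {x // x ∈ u}) × Fin (k j.1)) (Fin m) (ZMod 2) :=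
  fun p => rowAt m (C p.1.1) p.2.1

/-- `∇C_{u,k}`: the matrix whose rows are the `(k j + 1)`-st rows (1-indexed) of `C j`, `j ∈ u`. -/
def grad {m s : ℕ} (C : Fin s → Matrix (Fin m) (Fin m) (ZMod 2))
    (u : Finset (Fin s)) (k : Fin s → ℕ) :
    Matrix {x // x ∈ u} (Fin m) (ZMod 2) :=
  fun j => rowAt m (C j.1) (k j.1)

/-- The coordinate `x_{ij} ∈ [0,1)` of the digital net generated by `C₁,…,C_s`:
`x_{ij} = Σ_{ℓ=1}^m y_ℓ 2^{-ℓ}` where `y = C_j · i⃗` over `F₂`. -/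
def pt {m s : ℕ} (C : Fin s → Matrix (Fin m) (Fin m) (ZMod 2)) (i : ℕ) (j : Fin s) : ℝ :=
  ∑ ℓ : Fin m, (((C j).mulVec (bvec m i) ℓ).val : ℝ) / 2 ^ (ℓ.1 + 1)

/-- The factor `N`: with `M(x,x') = max{k ∈ ℕ₀ : ⌊2^k x⌋ = ⌊2^k x'⌋}` (the number of matching
leading binary digits), `Nf x x' c` equals `1` if `M(x,x') > c` (equivalently the first `c+1`
binary digits match), `-1` if `M(x,x') = c` (the first `c` digits match but not `c+1`), and
`0` if `M(x,x') < c`. -/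
def Nf (x x' : ℝ) (c : ℕ) : ℤ :=
  if ⌊(2:ℝ) ^ (c + 1) * x⌋ = ⌊(2:ℝ) ^ (c + 1) * x'⌋ then 1
  else if ⌊(2:ℝ) ^ c * x⌋ = ⌊(2:ℝ) ^ c * x'⌋ then -1
  else 0

/-- The gain coefficient `Γ_{u,k} = 2^{-m} Σ_{i=0}^{2^m-1} Σ_{i'=0}^{2^m-1} ∏_{j∈u} N_{i,i',j}`. -/
def Gam {m s : ℕ} (C : Fin s → Matrix (Fin m) (Fin m) (ZMod 2))
    (u : Finset (Fin s)) (k : Fin s → ℕ) : ℚ :=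
  (2 ^ m : ℚ)⁻¹ * ∑ i ∈ Finset.range (2 ^ m), ∑ i' ∈ Finset.range (2 ^ m),
      ∏ j ∈ u, (Nf (pt C i j) (pt C i' j) (k j) : ℚ)

/-! The points of a digital net are binary expansions `x = Σ_ℓ v_ℓ 2^{-(ℓ+1)}` with digits
`v = C_j i⃗`, so for `k_j = 0` the factor `N_{i,i',j}` is `(-1)^{v_0 + v'_0}`, a character of
the first digit. A rank deficiency of `C_{u,1_u}` gives a nonempty `u''` whose first rows sum to
zero; then `∏_{j ∈ u''} N_{i,i',j} = 1` for all `i, i'`, so `Γ_{u'',0} = 2^{-m} · 4^m = 2^m`.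
Conversely every `|N| ≤ 1`, so no gain coefficient exceeds `2^m`. -/

lemma exists_nonempty_sum_eq_zero_of_not_linearIndependent {ι M : Type*} [AddCommGroup M]
    [Module (ZMod 2) M] {v : ι → M} (hv : ¬LinearIndependent (ZMod 2) v) :
    ∃ S : Finset ι, S.Nonempty ∧ ∑ i ∈ S, v i = 0 := by
  classical
  obtain ⟨s, g, hsum, i, his, hgi⟩ := not_linearIndependent_iff.mp hv
  have hg_one : ∀ j, g j ≠ 0 → g j = 1 := by
    intro j; generalize g j = a; revert a; decide
  refine ⟨s.filter (g · ≠ 0), ⟨i, mem_filter.mpr ⟨his, hgi⟩⟩, ?_⟩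
  calc ∑ j ∈ s with g j ≠ 0, v j = ∑ j ∈ s with g j ≠ 0, g j • v j :=
        sum_congr rfl fun j hj => by rw [hg_one j (mem_filter.mp hj).2, one_smul]
    _ = 0 := by
        rw [sum_filter_of_ne, hsum]
        intro j _ h hg
        rw [hg, zero_smul] at h
        exact h rfl

lemma exists_sum_firstRow_eq_zero {m s : ℕ} (C : Fin s → Matrix (Fin m) (Fin m) (ZMod 2))
    {u : Finset (Fin s)} (hrank : (stack C u (fun _ => 1)).rank < u.card) :
    ∃ u'' : Finset (Fin s), u''.Nonempty ∧ ∑ j ∈ u'', rowAt m (C j) 0 = 0 := by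
  have hrows : ¬LinearIndependent (ZMod 2) fun j : u => rowAt m (C j) 0 := by
    intro hli
    have hstack : LinearIndependent (ZMod 2) (stack C u fun _ => 1).row := by
      refine (linearIndependent_equiv' (Equiv.sigmaUnique u fun _ => Fin 1) ?_).mpr hli
      ext ⟨j, r⟩ : 1
      rw [Subsingleton.elim r 0]
      rfl
    have hcard := hstack.rank_matrix
    simp only [Fintype.card_sigma, Fintype.card_unique, sum_const, card_univ, Fintype.card_coe,
      smul_eq_mul, mul_one] at hcard
    omega
  obtain ⟨S, hS, hsum⟩ := exists_nonempty_sum_eq_zero_of_not_linearIndependent hrows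
  exact ⟨S.map (.subtype _), hS.map, by rwa [sum_map]⟩

def binExp {m : ℕ} (v : Fin m → ZMod 2) : ℝ :=
  ∑ ℓ : Fin m, ((v ℓ).val : ℝ) / 2 ^ (ℓ.1 + 1)

lemma pt_eq_binExp {m s : ℕ} (C : Fin s → Matrix (Fin m) (Fin m) (ZMod 2)) (i : ℕ) (j : Fin s) :
    pt C i j = binExp ((C j).mulVec (bvec m i)) := rfl

lemma binExp_succ {n : ℕ} (v : Fin (n + 1) → ZMod 2) :
    binExp v = ((v 0).val + binExp (Fin.tail v)) / 2 := by
  simp only [binExp, Fin.sum_univ_succ, Fin.val_zero, Fin.val_succ, Fin.tail, add_div, sum_div]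
  congr 1
  · ring
  · exact sum_congr rfl fun ℓ _ => by rw [pow_succ]; ring

lemma binExp_mem_Ico {m : ℕ} (v : Fin m → ZMod 2) : binExp v ∈ Set.Ico 0 1 := by
  induction m with
  | zero => simp [binExp]
  | succ n ih =>
    obtain ⟨h0, h1⟩ := ih (Fin.tail v)
    have hd : ((v 0).val : ℝ) ≤ 1 := by exact_mod_cast Nat.le_of_lt_succ (ZMod.val_lt (v 0))
    rw [binExp_succ]
    constructor <;> [positivity; linarith]

lemma floor_binExp {m : ℕ} (v : Fin m → ZMod 2) : ⌊binExp v⌋ = 0 :=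
  Int.floor_eq_zero_iff.mpr (binExp_mem_Ico v)

lemma floor_two_mul_binExp {n : ℕ} (v : Fin (n + 1) → ZMod 2) :
    ⌊2 * binExp v⌋ = (v 0).val := by
  rw [binExp_succ, mul_div_cancel₀ _ two_ne_zero, Int.floor_natCast_add, floor_binExp, add_zero]

lemma Nf_binExp_zero {n : ℕ} (v w : Fin (n + 1) → ZMod 2) :
    (Nf (binExp v) (binExp w) 0 : ℚ) = (-1) ^ (v 0 + w 0).val := by
  simp only [Nf, zero_add, pow_one, pow_zero, one_mul, floor_two_mul_binExp, floor_binExp,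
    Nat.cast_inj, (ZMod.val_injective 2).eq_iff]
  generalize v 0 = a; generalize w 0 = b
  revert a b; decide

lemma prod_neg_one_pow_val {ι R : Type*} [CommRing R] (s : Finset ι)
    (a : ι → ZMod 2) : ∏ i ∈ s, (-1 : R) ^ (a i).val = (-1) ^ (∑ i ∈ s, a i).val := by
  rw [prod_pow_eq_pow_sum, neg_one_pow_eq_pow_mod_two, ← ZMod.val_natCast, Nat.cast_sum]
  simp only [ZMod.natCast_val, ZMod.cast_id', id]

lemma abs_Nf_le_one (x x' : ℝ) (c : ℕ) : |(Nf x x' c : ℚ)| ≤ 1 := by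
  unfold Nf; split_ifs <;> norm_num

lemma inv_two_pow_mul_sum_range_sum_range_one (m : ℕ) :
    (2 ^ m : ℚ)⁻¹ * ∑ _i ∈ range (2 ^ m), ∑ _i' ∈ range (2 ^ m), (1 : ℚ) = 2 ^ m := by
  simp only [sum_const, card_range, nsmul_eq_mul, mul_one, Nat.cast_pow, Nat.cast_ofNat]
  field_simp

lemma Gam_le_two_pow {m s : ℕ} (C : Fin s → Matrix (Fin m) (Fin m) (ZMod 2))
    (u : Finset (Fin s)) (k : Fin s → ℕ) : Gam C u k ≤ 2 ^ m := by
  refine (mul_le_mul_of_nonneg_left ?_ (by positivity)).trans_eq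
    (inv_two_pow_mul_sum_range_sum_range_one m)
  gcongr with i _ i' _
  calc ∏ j ∈ u, (Nf (pt C i j) (pt C i' j) (k j) : ℚ)
      ≤ |∏ j ∈ u, (Nf (pt C i j) (pt C i' j) (k j) : ℚ)| := le_abs_self _
    _ = ∏ j ∈ u, |(Nf (pt C i j) (pt C i' j) (k j) : ℚ)| := abs_prod _ _
    _ ≤ 1 := prod_le_one (fun _ _ => abs_nonneg _) fun _ _ => abs_Nf_le_one _ _ _

lemma Gam_eq_two_pow_of_prod_eq_one {m s : ℕ} (C : Fin s → Matrix (Fin m) (Fin m) (ZMod 2))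
    (u : Finset (Fin s)) (k : Fin s → ℕ)
    (h : ∀ i i', ∏ j ∈ u, (Nf (pt C i j) (pt C i' j) (k j) : ℚ) = 1) : Gam C u k = 2 ^ m := by
  simp only [Gam, h, inv_two_pow_mul_sum_range_sum_range_one]

lemma rowAt_succ_zero {n : ℕ} (A : Matrix (Fin (n + 1)) (Fin (n + 1)) (ZMod 2)) :
    rowAt (n + 1) A 0 = A 0 := by
  ext; simp [rowAt]

lemma prod_Nf_zero_eq_one {n s : ℕ} (C : Fin s → Matrix (Fin (n + 1)) (Fin (n + 1)) (ZMod 2))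
    {u : Finset (Fin s)} (hu : ∑ j ∈ u, rowAt (n + 1) (C j) 0 = 0) (i i' : ℕ) :
    ∏ j ∈ u, (Nf (pt C i j) (pt C i' j) 0 : ℚ) = 1 := by
  have hdigit (b : Fin (n + 1) → ZMod 2) : ∑ j ∈ u, (C j).mulVec b 0 = 0 := by
    simpa [rowAt_succ_zero, sum_dotProduct, Matrix.mulVec] using congrArg (· ⬝ᵥ b) hu
  simp only [pt_eq_binExp, Nf_binExp_zero, prod_neg_one_pow_val, sum_add_distrib, hdigit,
    add_zero, ZMod.val_zero, pow_zero]

theorem statement_general (m s : ℕ) (hm : 1 ≤ m)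
    (C : Fin s → Matrix (Fin m) (Fin m) (ZMod 2))
    (h : ∃ u : Finset (Fin s), u.Nonempty ∧ (stack C u (fun _ => 1)).rank < u.card) :
    IsGreatest {x : ℚ | ∃ u' : Finset (Fin s), ∃ k : Fin s → ℕ,
        u'.Nonempty ∧ (∀ j ∈ u', k j ≤ m - 1) ∧ x = Gam C u' k}
      ((2 : ℚ) ^ m) := by
  obtain ⟨u, -, hrank⟩ := h
  obtain ⟨u'', hne, hrows⟩ := exists_sum_firstRow_eq_zero C hrank
  obtain ⟨n, rfl⟩ := Nat.exists_eq_add_of_le' hm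
  refine ⟨⟨u'', fun _ => 0, hne, fun _ _ => Nat.zero_le _, ?_⟩, ?_⟩
  · exact (Gam_eq_two_pow_of_prod_eq_one C u'' _ (prod_Nf_zero_eq_one C hrows)).symm
  · rintro _ ⟨u', k, -, -, rfl⟩
    exact Gam_le_two_pow C u' k

theorem statement (m s : ℕ) (hm : 1 ≤ m) (hs : 1 ≤ s)
    (C : Fin s → Matrix (Fin m) (Fin m) (ZMod 2))
    (h : ∃ u : Finset (Fin s), u.Nonempty ∧ (stack C u (fun _ => 1)).rank < u.card) :
    IsGreatest {x : ℚ | ∃ u' : Finset (Fin s), ∃ k : Fin s → ℕ,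
        u'.Nonempty ∧ (∀ j ∈ u', k j ≤ m - 1) ∧ x = Gam C u' k}
      ((2 : ℚ) ^ m) :=
  statement_general m s hm C h
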